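/- arXiv:2310.10223 — 6 statements merged into one kernel-verified Lean document; each statement's English description precedes it below -/
import Mathlib

section
/- Let F be a field and let (x_n)_{n ∈ ℤ} be a sequence of nonzero elements of F satisfying the exchange relation x_{n-1} · x_{n+1} = 1 + x_n for all n ∈ ℤ. Then the sequence is 5-periodic: x_{n+5} = x_n for all n ∈ ℤ. -/
/-! The exchange relations close up around a pentagon: three consecutive relations
`a c = 1 + b`, `b d = 1 + c`, `c e = 1 + d` force the "wrap-around" relation `b e = 1 + a`,
because `c (b e) = b + b d = (1 + b) + c = c (1 + a)`. Shifting once more gives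
`x (n + 2) x (n + 5) = 1 + x (n + 1) = x (n + 2) x n`, and cancelling `x (n + 2)` yields period 5. -/

theorem exchange_wrap {R : Type*} [CommRing R] [IsDomain R] {a b c d e : R} (hc : c ≠ 0)
    (hac : a * c = 1 + b) (hbd : b * d = 1 + c) (hce : c * e = 1 + d) :
    b * e = 1 + a :=
  mul_left_cancel₀ hc <| by linear_combination b * hce + hbd - hac

theorem exchange_succ {R : Type*} [CommRing R] {x : ℤ → R}
    (hrel : ∀ n : ℤ, x (n - 1) * x (n + 1) = 1 + x n) (n : ℤ) :
    x n * x (n + 2) = 1 + x (n + 1) := by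
  simpa [add_assoc] using hrel (n + 1)

theorem exchange_wrap_seq {R : Type*} [CommRing R] [IsDomain R] {x : ℤ → R}
    (hrel : ∀ n : ℤ, x (n - 1) * x (n + 1) = 1 + x n) {n : ℤ} (hx : x (n + 2) ≠ 0) :
    x (n + 1) * x (n + 4) = 1 + x n := by
  have h₂ : x (n + 1) * x (n + 3) = 1 + x (n + 2) := by
    simpa [add_assoc] using exchange_succ hrel (n + 1)
  have h₃ : x (n + 2) * x (n + 4) = 1 + x (n + 3) := by
    simpa [add_assoc] using exchange_succ hrel (n + 2)
  exact exchange_wrap hx (exchange_succ hrel n) h₂ h₃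

/-- The 5-periodicity underlying the rank-2 Laurent phenomenon algebra (type `A₂`):
if `(x n)` is a sequence of nonzero elements of a field satisfying
`x (n-1) * x (n+1) = 1 + x n` for all `n`, then `x (n+5) = x n` for all `n`. -/
theorem pentagon_periodicity {F : Type*} [Field F] (x : ℤ → F)
    (hx : ∀ n : ℤ, x n ≠ 0)
    (hrel : ∀ n : ℤ, x (n - 1) * x (n + 1) = 1 + x n) :
    ∀ n : ℤ, x (n + 5) = x n := by
  intro n
  apply mul_left_cancel₀ (hx (n + 2))
  calc x (n + 2) * x (n + 5) = 1 + x (n + 1) := by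
        simpa [add_assoc] using exchange_wrap_seq hrel (hx (n + 1 + 2))
    _ = x (n + 2) * x n := by rw [← exchange_succ hrel n, mul_comm]
end

section
/- Let F be a field, let a_1,…,a_8 ∈ F, and let x_1, x_2, x_3 ∈ F be nonzero. Define x_4 = (a_5 x_2 + a_8 x_3 + a_2 a_3)/x_1, x_5 = (a_6 x_3 + a_1 x_4 + a_3 a_4)/x_2, x_6 = (a_7 x_4 + a_2 x_5 + a_4 a_5)/x_3, x_8 = (a_4 x_1 + a_7 x_2 + a_1 a_2)/x_3, and x_7 = (a_3 x_8 + a_6 x_1 + a_1 a_8)/x_2. Then the remaining defining quadrics of OGr(5,10) hold: x_4 x_7 = a_8 x_5 + a_3 x_6 + a_5 a_6, x_5 x_8 = a_1 x_6 + a_4 x_7 + a_6 a_7, x_6 x_1 = a_2 x_7 + a_5 x_8 + a_7 a_8, x_1 x_5 − a_1 a_5 = x_3 x_7 − a_3 a_7, and x_2 x_6 − a_2 a_6 = x_4 x_8 − a_4 a_8. -/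
/-!
With indices in `ZMod 8`, write `Eᵢ` for the exchange relation `xᵢ xᵢ₊₃ = …` and `Qᵢ` for the
quadric `xᵢ xᵢ₊₄ - aᵢ aᵢ₊₄ = xᵢ₊₂ xᵢ₊₆ - aᵢ₊₂ aᵢ₊₆`. The five formulas defining the chart are
exactly `E₁, E₂, E₃, E₇, E₈`. After multiplication by `x₂` or `x₃`, each missing relation is a
linear combination of relations already known: first `Q₁` and `Q₂` (from four exchange relations
each), then `E₄, E₅, E₆` (from `Q₁` or `Q₂` and three exchange relations). The system is invariant
under the rotation `i ↦ i + 1`, so each of these steps is one identity at an arbitrary index.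
-/

namespace OGr510

variable {R : Type*} [CommRing R] (a x : ZMod 8 → R)

def Exchange (i : ZMod 8) : Prop :=
  x i * x (i + 3) = a (i + 4) * x (i + 1) + a (i + 7) * x (i + 2) + a (i + 1) * a (i + 2)

def Quadric (i : ZMod 8) : Prop :=
  x i * x (i + 4) - a i * a (i + 4) = x (i + 2) * x (i + 6) - a (i + 2) * a (i + 6)

variable {a x} {i : ZMod 8}

theorem quadric_of_exchange (hx : IsLeftRegular (x (i + 1)))
    (h₀ : Exchange a x i) (h₁ : Exchange a x (i + 1))
    (h₆ : Exchange a x (i + 6)) (h₇ : Exchange a x (i + 7)) : Quadric a x i := by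
  simp only [Exchange, Quadric, add_assoc] at *
  -- normalizes index sums such as `i + (6 + 3)` to `i + 1`, computing in `ZMod 8`
  reduce_mod_char at *
  apply hx
  linear_combination x i * h₁ - x (i + 2) * h₆ + a i * h₀ - a (i + 2) * h₇

theorem exchange_add_five (hx : IsLeftRegular (x (i + 2)))
    (h₀ : Exchange a x i) (h₂ : Exchange a x (i + 2)) (h₇ : Exchange a x (i + 7))
    (hq : Quadric a x i) : Exchange a x (i + 5) := by
  simp only [Exchange, Quadric, add_assoc] at *
  reduce_mod_char at *
  apply hx
  linear_combination x i * h₂ + a (i + 6) * h₀ + a (i + 1) * hq - a (i + 4) * h₇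

theorem exchange_add_two (hx : IsLeftRegular (x i))
    (h₀ : Exchange a x i) (h₅ : Exchange a x (i + 5)) (h₇ : Exchange a x (i + 7))
    (hq : Quadric a x i) : Exchange a x (i + 2) := by
  simp only [Exchange, Quadric, add_assoc] at *
  reduce_mod_char at *
  apply hx
  linear_combination x (i + 2) * h₅ - a (i + 1) * hq + a (i + 4) * h₇ - a (i + 6) * h₀

theorem exchange_add_three (hx : IsLeftRegular (x i))
    (h₀ : Exchange a x i) (h₅ : Exchange a x (i + 5)) (h₆ : Exchange a x (i + 6))
    (hq : Quadric a x i) : Exchange a x (i + 3) := by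
  simp only [Exchange, Quadric, add_assoc] at *
  reduce_mod_char at *
  apply hx
  linear_combination x (i + 6) * h₀ + a (i + 4) * h₆ - a (i + 7) * hq - a (i + 2) * h₅

end OGr510

open OGr510 in
/-- The Laurent phenomenon for the initial cluster `{x₁, x₂, x₃}` of `OGr(5,10)`:
the generic torus chart parametrized by nonzero `x₁, x₂, x₃` satisfies all ten
defining quadrics of the orthogonal Grassmannian `OGr(5,10) ⊂ ℙ¹⁵`. -/
theorem ogr510_defining_quadrics {F : Type*} [Field F]
    (a₁ a₂ a₃ a₄ a₅ a₆ a₇ a₈ x₁ x₂ x₃ : F)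
    (hx₁ : x₁ ≠ 0) (hx₂ : x₂ ≠ 0) (hx₃ : x₃ ≠ 0)
    (x₄ x₅ x₆ x₇ x₈ : F)
    (hx₄ : x₄ = (a₅ * x₂ + a₈ * x₃ + a₂ * a₃) / x₁)
    (hx₅ : x₅ = (a₆ * x₃ + a₁ * x₄ + a₃ * a₄) / x₂)
    (hx₆ : x₆ = (a₇ * x₄ + a₂ * x₅ + a₄ * a₅) / x₃)
    (hx₈ : x₈ = (a₄ * x₁ + a₇ * x₂ + a₁ * a₂) / x₃)
    (hx₇ : x₇ = (a₃ * x₈ + a₆ * x₁ + a₁ * a₈) / x₂) :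
    x₄ * x₇ = a₈ * x₅ + a₃ * x₆ + a₅ * a₆ ∧
    x₅ * x₈ = a₁ * x₆ + a₄ * x₇ + a₆ * a₇ ∧
    x₆ * x₁ = a₂ * x₇ + a₅ * x₈ + a₇ * a₈ ∧
    x₁ * x₅ - a₁ * a₅ = x₃ * x₇ - a₃ * a₇ ∧
    x₂ * x₆ - a₂ * a₆ = x₄ * x₈ - a₄ * a₈ := by
  let a : ZMod 8 → F := ![a₈, a₁, a₂, a₃, a₄, a₅, a₆, a₇]
  let x : ZMod 8 → F := ![x₈, x₁, x₂, x₃, x₄, x₅, x₆, x₇]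
  have hr₂ : IsLeftRegular x₂ := (IsRegular.of_ne_zero hx₂).left
  have hr₃ : IsLeftRegular x₃ := (IsRegular.of_ne_zero hx₃).left
  have e₁ : Exchange a x 1 :=
    show x₁ * x₄ = a₅ * x₂ + a₈ * x₃ + a₂ * a₃ by rw [hx₄, mul_div_cancel₀ _ hx₁]
  have e₂ : Exchange a x 2 :=
    show x₂ * x₅ = a₆ * x₃ + a₁ * x₄ + a₃ * a₄ by rw [hx₅, mul_div_cancel₀ _ hx₂]
  have e₃ : Exchange a x 3 :=
    show x₃ * x₆ = a₇ * x₄ + a₂ * x₅ + a₄ * a₅ by rw [hx₆, mul_div_cancel₀ _ hx₃]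
  have e₇ : Exchange a x 7 :=
    show x₇ * x₂ = a₃ * x₈ + a₆ * x₁ + a₈ * a₁ by rw [hx₇, div_mul_cancel₀ _ hx₂, mul_comm a₁]
  have e₈ : Exchange a x 8 :=
    show x₈ * x₃ = a₄ * x₁ + a₇ * x₂ + a₁ * a₂ by rw [hx₈, div_mul_cancel₀ _ hx₃]
  have q₁ : Quadric a x 1 := quadric_of_exchange hr₂ e₁ e₂ e₇ e₈
  have q₂ : Quadric a x 2 := quadric_of_exchange hr₃ e₂ e₃ e₈ e₁
  exact ⟨exchange_add_two hr₂ e₂ e₇ e₁ q₂, exchange_add_three hr₂ e₂ e₇ e₈ q₂,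
    exchange_add_five hr₃ e₁ e₃ e₈ q₁, q₁, q₂⟩
end

section
/- With notation as in the context, the following identity holds in the quotient ring A_6 = R/I (i.e., the difference of the two sides lies in I): y_2 · y_3 = x_1 x_4 (a_5 x_2 + a_7 x_3 + a_2 a_{10}) + a_{12} x_3 (a_4 x_1 + a_1 a_9) + a_{12} x_2 (a_6 x_3 + a_8 x_4 + a_3 a_{11}), where y_2 = x_2 z_2 − a_2 x_1 − a_9 x_3 and y_3 = x_3 z_3 − a_3 x_2 − a_{10} x_4. -/
open MvPolynomial

namespace CayleyPlane

/-- The polynomial ring `R = ℂ[a₁,…,a₁₂, x₁,…,x₁₂, z₁, z₂, z₃]` in 27 variables,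
with `a`- and `x`-subscripts read mod 12 and `z`-subscripts read mod 3. -/
abbrev R6 : Type := MvPolynomial (ZMod 12 ⊕ ZMod 12 ⊕ ZMod 3) ℂ

/-- The frozen variable `aᵢ` (subscript mod 12). -/
noncomputable def a (i : ℤ) : R6 := X (Sum.inl (i : ZMod 12))

/-- The spinor coordinate `xᵢ` (subscript mod 12). -/
noncomputable def x (i : ℤ) : R6 := X (Sum.inr (Sum.inl (i : ZMod 12)))

/-- The spinor coordinate `zₖ` (subscript mod 3). -/
noncomputable def z (k : ℤ) : R6 := X (Sum.inr (Sum.inr (k : ZMod 3)))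

/-- The quadric `(aᵢ)`: `xᵢx_{i+5} − a_{i+5}x_{i+2} − aᵢz_{i+1} − a_{i+7}x_{i+3} − a_{i+2}a_{i+10}`. -/
noncomputable def quadA (i : ℤ) : R6 :=
  x i * x (i+5) - a (i+5) * x (i+2) - a i * z (i+1) - a (i+7) * x (i+3) - a (i+2) * a (i+10)

/-- The quadric `(bᵢ)`: `xᵢx_{i+4} − x_{i+2}z_{i+2} + a_{i+2}x_{i+1} + a_{i+9}x_{i+3} − aᵢa_{i+11}`. -/
noncomputable def quadB (i : ℤ) : R6 :=
  x i * x (i+4) - x (i+2) * z (i+2) + a (i+2) * x (i+1) + a (i+9) * x (i+3) - a i * a (i+11)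

/-- The quadric `(cₖ)`: `zₖz_{k+1} − x_{k+2}x_{k+8} − x_{k+5}x_{k+11} − a_{k+1}a_{k+7} − a_{k+4}a_{k+10}`. -/
noncomputable def quadC (k : ℤ) : R6 :=
  z k * z (k+1) - x (k+2) * x (k+8) - x (k+5) * x (k+11) - a (k+1) * a (k+7) - a (k+4) * a (k+10)

/-- The ideal `I ⊆ R` generated by the 27 quadrics defining the Cayley plane `𝕆ℙ² ⊂ ℙ²⁶`. -/
noncomputable def I6 : Ideal R6 :=
  Ideal.span (Set.range quadA ∪ Set.range quadB ∪ Set.range quadC)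

/-- The quadratic cluster variable `yᵢ := xᵢzᵢ − aᵢx_{i−1} − a_{i+7}x_{i+1}`. -/
noncomputable def y (i : ℤ) : R6 := x i * z i - a i * x (i-1) - a (i+7) * x (i+1)

end CayleyPlane

/-! `y₂y₃` minus the right-hand side is an explicit `R`-linear combination of the quadrics
`(a₁₂), (a₁), (b₁), (b₂), (b₁₂)`; once the subscripts are reduced modulo 12 and 3, checking this is
a ring identity. -/

namespace CayleyPlane

theorem quadA_mem_I6 (i : ℤ) : quadA i ∈ I6 :=
  Ideal.subset_span (Or.inl (Or.inl ⟨i, rfl⟩))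

theorem quadB_mem_I6 (i : ℤ) : quadB i ∈ I6 :=
  Ideal.subset_span (Or.inl (Or.inr ⟨i, rfl⟩))

theorem y_two_mul_y_three_sub_eq :
    y 2 * y 3 -
      (x 1 * x 4 * (a 5 * x 2 + a 7 * x 3 + a 2 * a 10) +
        a 12 * x 3 * (a 4 * x 1 + a 1 * a 9) +
        a 12 * x 2 * (a 6 * x 3 + a 8 * x 4 + a 3 * a 11)) =
      x 1 * x 4 * quadA 12 + a 12 * x 2 * quadA 1 - a 12 * x 1 * quadB 2
        - (x 12 * x 4 - a 11 * a 12) * quadB 1 - (x 1 * x 5 - quadB 1) * quadB 12 := by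
  simp only [y, quadA, quadB, a, x, z]
  push_cast
  reduce_mod_char
  ring

end CayleyPlane

open CayleyPlane in
/-- In `A₆ = R/I`, the exchange relation for `y₂ · y₃` holds:
`y₂y₃ = x₁x₄(a₅x₂ + a₇x₃ + a₂a₁₀) + a₁₂x₃(a₄x₁ + a₁a₉) + a₁₂x₂(a₆x₃ + a₈x₄ + a₃a₁₁)`. -/
theorem cayley_y2_y3_exchange :
    y 2 * y 3 -
      (x 1 * x 4 * (a 5 * x 2 + a 7 * x 3 + a 2 * a 10) +
        a 12 * x 3 * (a 4 * x 1 + a 1 * a 9) +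
        a 12 * x 2 * (a 6 * x 3 + a 8 * x 4 + a 3 * a 11)) ∈ I6 := by
  rw [y_two_mul_y_three_sub_eq]
  exact I6.sub_mem (I6.sub_mem (I6.sub_mem
    (I6.add_mem (I6.mul_mem_left _ (quadA_mem_I6 12)) (I6.mul_mem_left _ (quadA_mem_I6 1)))
    (I6.mul_mem_left _ (quadB_mem_I6 2))) (I6.mul_mem_left _ (quadB_mem_I6 1)))
    (I6.mul_mem_left _ (quadB_mem_I6 12))
end

section
/- In the lattice Λ = ℤ^6 with bilinear form ⟨u,v⟩ = u_0 v_0 − u_1 v_1 − ⋯ − u_5 v_5 and K = (−3,1,1,1,1,1), there are exactly 16 line classes (vectors v with ⟨v,v⟩ = −1 and ⟨v,K⟩ = −1). Moreover, with ρ_r(v) = v + ⟨r,v⟩ r the reflection in a root r, H = (1,0,0,0,0,0), e_i the standard basis vector in position i (1 ≤ i ≤ 5), and simple roots r_1 = e_1 − e_2, r_2 = H − e_1 − e_2 − e_3, r_3 = e_2 − e_3, r_4 = e_3 − e_4, r_5 = e_4 − e_5, the Coxeter rotation σ = ρ_{r_1} ∘ ρ_{r_2} ∘ ρ_{r_3}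 ∘ ρ_{r_4} ∘ ρ_{r_5} has order 8 and its action on the 16 line classes has exactly two orbits, each of size 8. -/
namespace DP4Lattice

/-- The bilinear form `⟨u,v⟩ = u₀v₀ − u₁v₁ − ⋯ − u₅v₅` on `Λ = ℤ⁶`. -/
def B (u v : Fin 6 → ℤ) : ℤ := u 0 * v 0 - ∑ i : Fin 5, u i.succ * v i.succ

/-- The canonical class `K = (−3,1,1,1,1,1)`. -/
def K : Fin 6 → ℤ := ![-3, 1, 1, 1, 1, 1]

/-- The set of line classes: `⟨v,v⟩ = −1` and `⟨v,K⟩ = −1`. -/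
def lineClasses : Set (Fin 6 → ℤ) := {v | B v v = -1 ∧ B v K = -1}

/-- The reflection `ρ_r(v) = v + ⟨r,v⟩ r` in a root `r`. -/
def refl (r v : Fin 6 → ℤ) : Fin 6 → ℤ := v + B r v • r

/-- The hyperplane class `H = (1,0,0,0,0,0)`. -/
def H : Fin 6 → ℤ := ![1, 0, 0, 0, 0, 0]

/-- The standard basis vector `eᵢ` of `ℤ⁶`. -/
def e (i : Fin 6) : Fin 6 → ℤ := Pi.single i 1

/-- The Coxeter rotation `σ = ρ_{r₁} ∘ ρ_{r₂} ∘ ρ_{r₃} ∘ ρ_{r₄} ∘ ρ_{r₅}` for the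
simple roots `r₁ = e₁−e₂`, `r₂ = H−e₁−e₂−e₃`, `r₃ = e₂−e₃`, `r₄ = e₃−e₄`,
`r₅ = e₄−e₅` of `E₅ = D₅`. -/
def σ : (Fin 6 → ℤ) → (Fin 6 → ℤ) :=
  refl (e 1 - e 2) ∘ refl (H - e 1 - e 2 - e 3) ∘ refl (e 2 - e 3) ∘
    refl (e 3 - e 4) ∘ refl (e 4 - e 5)

/-- The `σ`-orbit of a lattice vector. -/
def orbit (v : Fin 6 → ℤ) : Set (Fin 6 → ℤ) := Set.range fun k : ℕ => σ^[k] v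

end DP4Lattice

/-!
Reflections in roots preserve the form and fix `K`, so `σ` permutes the line classes. Being
linear, `σ` satisfies `σ⁸ = id` as soon as it does on the standard basis; every `σ`-orbit is then
the image of `{0, …, 7}`. Cauchy–Schwarz puts every line class in the box
`{0,1,2} × {-1,0,1}⁵`, and a finite search there shows that each line class lies in the orbit of
`e₁` or of `e₃`, two disjoint orbits of size eight. Finally `σᵏ = id` with `0 < k < 8` would give
the orbit of `e₁` at most `k` elements.
-/

theorem Function.IsPeriodicPt.range_iterate_eq_image {α : Type*} [DecidableEq α] {f : α → α}
    {x : α} {n : ℕ} (hn : 0 < n) (hx : Function.IsPeriodicPt f n x) :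
    Set.range (fun k => f^[k] x) = ((Finset.range n).image fun k => f^[k] x : Finset α) := by
  ext y
  simp only [Set.mem_range, Finset.coe_image, Finset.coe_range, Set.mem_image, Set.mem_Iio]
  constructor
  · rintro ⟨k, rfl⟩
    exact ⟨k % n, Nat.mod_lt k hn, hx.iterate_mod_apply k⟩
  · rintro ⟨k, -, rfl⟩
    exact ⟨k, rfl⟩

theorem Function.IsPeriodicPt.ncard_range_iterate_le {α : Type*} {f : α → α} {x : α} {n : ℕ}
    (hn : 0 < n) (hx : Function.IsPeriodicPt f n x) :
    (Set.range fun k => f^[k] x).ncard ≤ n := by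
  classical
  rw [hx.range_iterate_eq_image hn, Set.ncard_coe_finset]
  exact Finset.card_image_le.trans (Finset.card_range n).le

namespace DP4Lattice

theorem B_comm (u v : Fin 6 → ℤ) : B u v = B v u := by
  simp only [B, mul_comm]

theorem B_add_left (u v w : Fin 6 → ℤ) : B (u + v) w = B u w + B v w := by
  simp only [B, Pi.add_apply, add_mul, Finset.sum_add_distrib]
  ring

theorem B_add_right (u v w : Fin 6 → ℤ) : B u (v + w) = B u v + B u w := by
  rw [B_comm, B_add_left, B_comm v, B_comm w]

theorem B_smul_left (c : ℤ) (u v : Fin 6 → ℤ) : B (c • u) v = c * B u v := by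
  simp only [B, Pi.smul_apply, smul_eq_mul, mul_assoc, ← Finset.mul_sum]
  ring

theorem B_smul_right (c : ℤ) (u v : Fin 6 → ℤ) : B u (c • v) = c * B u v := by
  rw [B_comm, B_smul_left, B_comm]

theorem B_self_eq (v : Fin 6 → ℤ) : B v v = v 0 ^ 2 - ∑ i : Fin 5, v i.succ ^ 2 := by
  simp only [B, sq]

theorem B_K_eq (v : Fin 6 → ℤ) : B v K = -3 * v 0 - ∑ i : Fin 5, v i.succ := by
  have hK : ∀ i : Fin 5, K i.succ = 1 := by decide
  simp only [B, hK, mul_one]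
  rw [show K 0 = -3 from rfl, mul_comm]

def IsRoot (r : Fin 6 → ℤ) : Prop := B r r = -2 ∧ B r K = 0

theorem B_refl_refl {r : Fin 6 → ℤ} (hr : B r r = -2) (u v : Fin 6 → ℤ) :
    B (refl r u) (refl r v) = B u v := by
  simp only [refl, B_add_left, B_add_right, B_smul_left, B_smul_right, hr, B_comm u r]
  ring

theorem refl_of_B_eq_zero {r v : Fin 6 → ℤ} (h : B r v = 0) : refl r v = v := by
  simp [refl, h]

theorem IsRoot.mapsTo_refl {r : Fin 6 → ℤ} (hr : IsRoot r) :
    Set.MapsTo (refl r) lineClasses lineClasses := by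
  rintro v ⟨hvv, hvK⟩
  refine ⟨(B_refl_refl hr.1 v v).trans hvv, ?_⟩
  calc B (refl r v) K = B (refl r v) (refl r K) := by rw [refl_of_B_eq_zero hr.2]
    _ = B v K := B_refl_refl hr.1 v K
    _ = -1 := hvK

theorem mapsTo_σ : Set.MapsTo σ lineClasses lineClasses := by
  obtain ⟨h₁, h₂, h₃, h₄, h₅⟩ : IsRoot (e 1 - e 2) ∧ IsRoot (H - e 1 - e 2 - e 3) ∧
      IsRoot (e 2 - e 3) ∧ IsRoot (e 3 - e 4) ∧ IsRoot (e 4 - e 5) := by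
    unfold IsRoot; decide
  exact h₁.mapsTo_refl.comp <| h₂.mapsTo_refl.comp <| h₃.mapsTo_refl.comp <|
    h₄.mapsTo_refl.comp h₅.mapsTo_refl

theorem e_mem_lineClasses {i : Fin 6} (hi : i ≠ 0) : e i ∈ lineClasses := by
  revert i
  unfold lineClasses
  decide

theorem orbit_subset_lineClasses {v : Fin 6 → ℤ} (hv : v ∈ lineClasses) :
    orbit v ⊆ lineClasses := by
  rintro _ ⟨k, rfl⟩
  exact mapsTo_σ.iterate k hv

def reflₗ (r : Fin 6 → ℤ) : Module.End ℤ (Fin 6 → ℤ) where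
  toFun := refl r
  map_add' u v := by
    simp only [refl, B_add_right, add_smul]
    abel
  map_smul' c v := by
    simp only [refl, B_smul_right, mul_smul, smul_add, RingHom.id_apply]

def σₗ : Module.End ℤ (Fin 6 → ℤ) :=
  reflₗ (e 1 - e 2) * reflₗ (H - e 1 - e 2 - e 3) * reflₗ (e 2 - e 3) *
    reflₗ (e 3 - e 4) * reflₗ (e 4 - e 5)

theorem coe_σₗ : ⇑σₗ = σ := rfl

set_option maxRecDepth 10000 in
theorem σ_iterate_eight_apply_e : ∀ i, σ^[8] (e i) = e i := by
  decide

theorem σ_iterate_eight : σ^[8] = id := by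
  have h : σₗ ^ 8 = 1 := (Pi.basisFun ℤ (Fin 6)).ext fun i => by
    simpa only [Module.End.pow_apply, coe_σₗ, Module.End.one_apply, Pi.basisFun_apply, e]
      using σ_iterate_eight_apply_e i
  rw [← coe_σₗ, ← Module.End.coe_pow, h, Module.End.coe_one]

def orbitFinset (v : Fin 6 → ℤ) : Finset (Fin 6 → ℤ) := (Finset.range 8).image fun k => σ^[k] v

theorem orbit_eq_orbitFinset (v : Fin 6 → ℤ) : orbit v = orbitFinset v :=
  Function.IsPeriodicPt.range_iterate_eq_image (by norm_num) (congrFun σ_iterate_eight v)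

set_option maxRecDepth 10000 in
theorem orbitFinset_e_one_e_three_card_disjoint :
    (orbitFinset (e 1)).card = 8 ∧ (orbitFinset (e 3)).card = 8 ∧
      Disjoint (orbitFinset (e 1)) (orbitFinset (e 3)) := by
  decide

/- With `a = v 0` and `xᵢ = v i.succ`, the two equations fix `∑ xᵢ² = a² + 1` and
`∑ (xᵢ + 1)² = (a - 2)(a - 4)`, and Cauchy–Schwarz on `∑ xᵢ = 1 - 3a` confines `a`. -/
theorem lineClasses_bounds {v : Fin 6 → ℤ} (hv : v ∈ lineClasses) :
    0 ≤ v 0 ∧ v 0 ≤ 2 ∧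
      ∀ i : Fin 5, v i.succ ^ 2 ≤ v 0 ^ 2 + 1 ∧ (v i.succ + 1) ^ 2 ≤ (v 0 - 2) * (v 0 - 4) := by
  obtain ⟨hvv, hvK⟩ := hv
  rw [B_self_eq] at hvv
  rw [B_K_eq] at hvK
  have hsq : ∑ i : Fin 5, v i.succ ^ 2 = v 0 ^ 2 + 1 := by linarith
  have hsum : ∑ i : Fin 5, v i.succ = 1 - 3 * v 0 := by linarith
  have hcs := sq_sum_le_card_mul_sum_sq (s := Finset.univ) (f := fun i : Fin 5 => v i.succ)
  rw [hsq, hsum, Finset.card_univ, Fintype.card_fin, Nat.cast_ofNat] at hcs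
  have hquad : (2 * v 0 + 1) * (v 0 - 2) ≤ 0 := by linarith
  have hshift : ∑ i : Fin 5, (v i.succ + 1) ^ 2 = (v 0 - 2) * (v 0 - 4) := by
    calc ∑ i : Fin 5, (v i.succ + 1) ^ 2
        = ∑ i : Fin 5, v i.succ ^ 2 + 2 * ∑ i : Fin 5, v i.succ + 5 := by
          simp only [add_sq, Finset.sum_add_distrib, Finset.mul_sum]
          simp
      _ = (v 0 - 2) * (v 0 - 4) := by rw [hsq, hsum]; ring
  have hle {f : Fin 5 → ℤ} (i : Fin 5) : f i ^ 2 ≤ ∑ j, f j ^ 2 :=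
    Finset.single_le_sum (fun j _ => sq_nonneg (f j)) (Finset.mem_univ i)
  refine ⟨by nlinarith, by nlinarith, fun i => ⟨?_, ?_⟩⟩
  · exact hsq ▸ hle (f := fun j => v j.succ) i
  · exact hshift ▸ hle (f := fun j => v j.succ + 1) i

def lineBox : Finset (Fin 6 → ℤ) :=
  Fintype.piFinset fun i => if i = 0 then {0, 1, 2} else {-1, 0, 1}

theorem mem_lineBox {v : Fin 6 → ℤ} (hv : v ∈ lineClasses) : v ∈ lineBox := by
  obtain ⟨h0, h2, hx⟩ := lineClasses_bounds hv
  rw [lineBox, Fintype.mem_piFinset]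
  intro i
  cases i using Fin.cases with
  | zero =>
    simp only [if_pos, Finset.mem_insert, Finset.mem_singleton]
    omega
  | succ j =>
    obtain ⟨hsq, hshift⟩ := hx j
    have : -1 ≤ v j.succ ∧ v j.succ ≤ 1 := by
      interval_cases v 0 <;> constructor <;> nlinarith
    simp only [Fin.succ_ne_zero, if_false, Finset.mem_insert, Finset.mem_singleton]
    omega

set_option maxRecDepth 10000 in
theorem mem_orbitFinset_of_mem_lineBox : ∀ v ∈ lineBox, B v v = -1 → B v K = -1 →
    v ∈ orbitFinset (e 1) ∪ orbitFinset (e 3) := by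
  decide

theorem lineClasses_eq_orbit_union : lineClasses = orbit (e 1) ∪ orbit (e 3) := by
  refine subset_antisymm (fun v hv => ?_) ?_
  · rw [orbit_eq_orbitFinset, orbit_eq_orbitFinset, ← Finset.coe_union, Finset.mem_coe]
    exact mem_orbitFinset_of_mem_lineBox v (mem_lineBox hv) hv.1 hv.2
  · exact Set.union_subset (orbit_subset_lineClasses (e_mem_lineClasses (by decide)))
      (orbit_subset_lineClasses (e_mem_lineClasses (by decide)))

end DP4Lattice

open DP4Lattice in
/-- In the Néron–Severi lattice of a degree-4 del Pezzo surface there are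
exactly 16 line classes; the Coxeter rotation `σ` of `E₅` has order 8 and acts
on the 16 line classes with exactly two orbits, each of size 8. -/
theorem coxeter_rotation_E5 :
    lineClasses.ncard = 16 ∧
    σ^[8] = id ∧
    (∀ k : ℕ, 0 < k → k < 8 → σ^[k] ≠ id) ∧
    (∀ v ∈ lineClasses, σ v ∈ lineClasses) ∧
    ∃ v₁ ∈ lineClasses, ∃ v₂ ∈ lineClasses,
      (orbit v₁).ncard = 8 ∧ (orbit v₂).ncard = 8 ∧
      Disjoint (orbit v₁) (orbit v₂) ∧
      orbit v₁ ∪ orbit v₂ = lineClasses := by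
  obtain ⟨hcard₁, hcard₃, hdisj⟩ := orbitFinset_e_one_e_three_card_disjoint
  have hncard₁ : (orbit (e 1)).ncard = 8 := by
    rw [orbit_eq_orbitFinset, Set.ncard_coe_finset, hcard₁]
  refine ⟨?_, σ_iterate_eight, fun k hk0 hk8 hk => ?_, fun v hv => mapsTo_σ hv,
    e 1, e_mem_lineClasses (by decide), e 3, e_mem_lineClasses (by decide), hncard₁, ?_, ?_,
    lineClasses_eq_orbit_union.symm⟩
  · rw [lineClasses_eq_orbit_union, orbit_eq_orbitFinset, orbit_eq_orbitFinset,
      ← Finset.coe_union, Set.ncard_coe_finset, Finset.card_union_of_disjoint hdisj, hcard₁,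
      hcard₃]
  · have hperiodic : Function.IsPeriodicPt σ k (e 1) := congrFun hk (e 1)
    have horbit := hperiodic.ncard_range_iterate_le hk0
    rw [← orbit, hncard₁] at horbit
    omega
  · rw [orbit_eq_orbitFinset, Set.ncard_coe_finset, hcard₃]
  · rwa [orbit_eq_orbitFinset, orbit_eq_orbitFinset, Finset.disjoint_coe]
end

section
/- In the lattice Λ = ℤ^5 with bilinear form ⟨u,v⟩ = u_0 v_0 − u_1 v_1 − u_2 v_2 − u_3 v_3 − u_4 v_4 and K = (−3,1,1,1,1), there are exactly 10 line classes (vectors v with ⟨v,v⟩ = −1 and ⟨v,K⟩ = −1). Moreover, with ρ_r(v) = v + ⟨r,v⟩ r the reflection in a root r, H = (1,0,0,0,0), e_i the standard basis vector in position i (1 ≤ i ≤ 4), and simple roots r_1 = e_1 − e_2, r_2 = H − e_1 − e_2 − e_3, r_3 = e_2 − e_3, r_4 = e_3 − e_4, the Coxeter rotation σ = ρ_{r_1} ∘ ρ_{r_2} ∘ ρ_{r_3} ∘ ρ_{r_4} has order 5 and its action on the 10 line classes has exactly two orbits, each of size 5. -/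
namespace DP5Lattice

/-- The bilinear form `⟨u,v⟩ = u₀v₀ − u₁v₁ − u₂v₂ − u₃v₃ − u₄v₄` on `Λ = ℤ⁵`. -/
def B (u v : Fin 5 → ℤ) : ℤ := u 0 * v 0 - ∑ i : Fin 4, u i.succ * v i.succ

/-- The canonical class `K = (−3,1,1,1,1)`. -/
def K : Fin 5 → ℤ := ![-3, 1, 1, 1, 1]

/-- The set of line classes: `⟨v,v⟩ = −1` and `⟨v,K⟩ = −1`. -/
def lineClasses : Set (Fin 5 → ℤ) := {v | B v v = -1 ∧ B v K = -1}

/-- The reflection `ρ_r(v) = v + ⟨r,v⟩ r` in a root `r`. -/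
def refl (r v : Fin 5 → ℤ) : Fin 5 → ℤ := v + B r v • r

/-- The hyperplane class `H = (1,0,0,0,0)`. -/
def H : Fin 5 → ℤ := ![1, 0, 0, 0, 0]

/-- The standard basis vector `eᵢ` of `ℤ⁵`. -/
def e (i : Fin 5) : Fin 5 → ℤ := Pi.single i 1

/-- The Coxeter rotation `σ = ρ_{r₁} ∘ ρ_{r₂} ∘ ρ_{r₃} ∘ ρ_{r₄}` for the simple
roots `r₁ = e₁−e₂`, `r₂ = H−e₁−e₂−e₃`, `r₃ = e₂−e₃`, `r₄ = e₃−e₄` of `E₄ = A₄`. -/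
def σ : (Fin 5 → ℤ) → (Fin 5 → ℤ) :=
  refl (e 1 - e 2) ∘ refl (H - e 1 - e 2 - e 3) ∘ refl (e 2 - e 3) ∘ refl (e 3 - e 4)

/-- The `σ`-orbit of a lattice vector. -/
def orbit (v : Fin 5 → ℤ) : Set (Fin 5 → ℤ) := Set.range fun k : ℕ => σ^[k] v

end DP5Lattice

/-!
Reflections in roots are isometries of `⟨·,·⟩` fixing `K`, so `σ` permutes the line classes.
Cauchy–Schwarz bounds every coordinate of a line class by `1`, and the remaining finite search
finds the ten classes `eᵢ` and `H − eᵢ − eⱼ`. In the standard basis `σ` is an integer matrix `C`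
with `C⁵ = 1`, so every `σ`-orbit is `{σᵏ v | k < 5}`. The orbits of `e₁` and `e₃` are then
computed directly; they have five elements each, which also rules out `σᵏ = id` for `0 < k < 5`.
-/

namespace Function.IsPeriodicPt

variable {α : Type*} {f : α → α} {n : ℕ} {x : α}

theorem range_iterate_eq [DecidableEq α] (hx : IsPeriodicPt f n x) (hn : 0 < n) :
    Set.range (fun k => f^[k] x) = ↑((Finset.range n).image fun k => f^[k] x) := by
  ext y
  simp only [Set.mem_range, Finset.coe_image, Finset.coe_range, Set.mem_image, Set.mem_Iio]
  constructor
  · rintro ⟨k, rfl⟩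
    exact ⟨k % n, Nat.mod_lt k hn, hx.iterate_mod_apply k⟩
  · rintro ⟨k, -, rfl⟩
    exact ⟨k, rfl⟩

theorem ncard_range_iterate_le_s14 (hx : IsPeriodicPt f n x) (hn : 0 < n) :
    (Set.range fun k => f^[k] x).ncard ≤ n := by
  classical
  rw [hx.range_iterate_eq hn, Set.ncard_coe_finset]
  exact Finset.card_image_le.trans (Finset.card_range n).le

end Function.IsPeriodicPt

namespace DP5Lattice

open Matrix

theorem B_apply (u v : Fin 5 → ℤ) :
    B u v = u 0 * v 0 - (u 1 * v 1 + u 2 * v 2 + u 3 * v 3 + u 4 * v 4) := by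
  simp [B, Fin.sum_univ_four]

def IsRoot (r : Fin 5 → ℤ) : Prop := B r r = -2 ∧ B r K = 0

theorem B_refl_refl {r : Fin 5 → ℤ} (hr : B r r = -2) (u v : Fin 5 → ℤ) :
    B (refl r u) (refl r v) = B u v := by
  unfold refl
  generalize ha : B r u = a
  generalize hb : B r v = b
  simp only [B_apply, Pi.add_apply, Pi.smul_apply, smul_eq_mul] at ha hb hr ⊢
  linear_combination b * ha + a * hb + a * b * hr

theorem refl_eq_self_of_B_eq_zero {r v : Fin 5 → ℤ} (h : B r v = 0) : refl r v = v := by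
  simp [refl, h]

theorem IsRoot.mapsTo_refl {r : Fin 5 → ℤ} (hr : IsRoot r) :
    Set.MapsTo (refl r) lineClasses lineClasses := by
  rintro v ⟨hvv, hvK⟩
  refine ⟨(B_refl_refl hr.1 v v).trans hvv, ?_⟩
  rw [← refl_eq_self_of_B_eq_zero hr.2, B_refl_refl hr.1]
  exact hvK

theorem mapsTo_σ : Set.MapsTo σ lineClasses lineClasses := by
  have hroots : IsRoot (e 1 - e 2) ∧ IsRoot (H - e 1 - e 2 - e 3) ∧ IsRoot (e 2 - e 3) ∧
      IsRoot (e 3 - e 4) := by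
    unfold IsRoot; decide
  obtain ⟨h₁, h₂, h₃, h₄⟩ := hroots
  exact h₁.mapsTo_refl.comp (h₂.mapsTo_refl.comp (h₃.mapsTo_refl.comp h₄.mapsTo_refl))

theorem abs_le_one_of_mem_lineClasses {v : Fin 5 → ℤ} (hv : v ∈ lineClasses) (i : Fin 5) :
    |v i| ≤ 1 := by
  obtain ⟨hvv, hvK⟩ := hv
  simp only [B_apply, K, cons_val] at hvv hvK
  -- Cauchy–Schwarz for `v₁ + ⋯ + v₄ = 1 − 3v₀` against `v₁² + ⋯ + v₄² = v₀² + 1`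
  have hv₀ : 5 * v 0 ^ 2 - 6 * v 0 - 3 ≤ 0 := by
    nlinarith [sq_nonneg (v 1 - v 2), sq_nonneg (v 1 - v 3), sq_nonneg (v 1 - v 4),
      sq_nonneg (v 2 - v 3), sq_nonneg (v 2 - v 4), sq_nonneg (v 3 - v 4)]
  have hsq : v i ^ 2 ≤ 2 := by
    have hv₀_nonneg : 0 ≤ v 0 := by nlinarith
    have hv₀_le_one : v 0 ≤ 1 := by nlinarith
    fin_cases i <;> simp only [Fin.zero_eta, Fin.mk_one, Fin.reduceFinMk, Fin.isValue] <;>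
      nlinarith [sq_nonneg (v 1), sq_nonneg (v 2), sq_nonneg (v 3), sq_nonneg (v 4)]
  have habs : |v i| < 2 := by nlinarith [sq_abs (v i), abs_nonneg (v i)]
  omega

-- the exceptional curves `eᵢ` and the strict transforms `H − eᵢ − eⱼ` of lines through two points
def lineFinset : Finset (Fin 5 → ℤ) :=
  {![0, 1, 0, 0, 0], ![0, 0, 1, 0, 0], ![0, 0, 0, 1, 0], ![0, 0, 0, 0, 1],
   ![1, -1, -1, 0, 0], ![1, -1, 0, -1, 0], ![1, -1, 0, 0, -1],
   ![1, 0, -1, -1, 0], ![1, 0, -1, 0, -1], ![1, 0, 0, -1, -1]}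

set_option maxRecDepth 10000 in
theorem lineFinset_eq_filter : lineFinset = (Fintype.piFinset fun _ => Finset.Icc (-1) 1).filter
    fun v => B v v = -1 ∧ B v K = -1 := by
  decide

theorem lineClasses_eq : lineClasses = lineFinset := by
  ext v
  simp only [lineFinset_eq_filter, Finset.coe_filter, Fintype.mem_piFinset, Finset.mem_Icc,
    Set.mem_ofPred_eq, ← abs_le]
  exact ⟨fun hv => ⟨abs_le_one_of_mem_lineClasses hv, hv⟩, And.right⟩

def coxeterMatrix : Matrix (Fin 5) (Fin 5) ℤ :=
  !![2, 1, 1, 0, 1; -1, -1, -1, 0, 0; -1, 0, -1, 0, -1; -1, -1, 0, 0, -1; 0, 0, 0, 1, 0]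

theorem σ_eq_mulVec (v : Fin 5 → ℤ) : σ v = coxeterMatrix *ᵥ v := by
  have h₁ : e 1 - e 2 = ![0, 1, -1, 0, 0] := by decide
  have h₂ : H - e 1 - e 2 - e 3 = ![1, -1, -1, -1, 0] := by decide
  have h₃ : e 2 - e 3 = ![0, 0, 1, -1, 0] := by decide
  have h₄ : e 3 - e 4 = ![0, 0, 0, 1, -1] := by decide
  funext i
  fin_cases i <;>
    simp only [σ, h₁, h₂, h₃, h₄, Function.comp_apply, refl, B_apply, Pi.add_apply, Pi.smul_apply,
      smul_eq_mul, coxeterMatrix, mulVec, dotProduct, Fin.sum_univ_five, of_apply, cons_val,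
      Fin.zero_eta, Fin.mk_one, Fin.reduceFinMk, Fin.isValue] <;>
    ring

theorem iterate_σ (k : ℕ) (v : Fin 5 → ℤ) : σ^[k] v = (coxeterMatrix ^ k) *ᵥ v := by
  induction k with
  | zero => simp
  | succ k ih => rw [Function.iterate_succ_apply', ih, σ_eq_mulVec, mulVec_mulVec, pow_succ']

theorem coxeterMatrix_pow_five : coxeterMatrix ^ 5 = 1 := by
  decide

theorem iterate_σ_five : σ^[5] = id := by
  funext v
  rw [iterate_σ, coxeterMatrix_pow_five, one_mulVec, id]

theorem orbit_eq (v : Fin 5 → ℤ) : orbit v = ↑((Finset.range 5).image fun k => σ^[k] v) :=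
  Function.IsPeriodicPt.range_iterate_eq (congrFun iterate_σ_five v) (by norm_num)

end DP5Lattice

open DP5Lattice in
/-- In the Néron–Severi lattice of a degree-5 del Pezzo surface there are
exactly 10 line classes; the Coxeter rotation `σ` of `E₄` has order 5 and acts
on the 10 line classes with exactly two orbits, each of size 5. -/
theorem coxeter_rotation_E4 :
    lineClasses.ncard = 10 ∧
    σ^[5] = id ∧
    (∀ k : ℕ, 0 < k → k < 5 → σ^[k] ≠ id) ∧
    (∀ v ∈ lineClasses, σ v ∈ lineClasses) ∧
    ∃ v₁ ∈ lineClasses, ∃ v₂ ∈ lineClasses,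
      (orbit v₁).ncard = 5 ∧ (orbit v₂).ncard = 5 ∧
      Disjoint (orbit v₁) (orbit v₂) ∧
      orbit v₁ ∪ orbit v₂ = lineClasses := by
  have horbit₁ : (orbit ![0, 1, 0, 0, 0]).ncard = 5 := by
    rw [orbit_eq, Set.ncard_coe_finset]; decide
  refine ⟨?_, iterate_σ_five, ?_, mapsTo_σ, ![0, 1, 0, 0, 0], ?_, ![0, 0, 0, 1, 0], ?_, horbit₁,
    ?_, ?_, ?_⟩
  · rw [lineClasses_eq, Set.ncard_coe_finset]; rfl
  · intro k hk hk5 hσk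
    have hle := Function.IsPeriodicPt.ncard_range_iterate_le_s14 (congrFun hσk ![0, 1, 0, 0, 0]) hk
    rw [← orbit, horbit₁] at hle
    omega
  · rw [lineClasses_eq]; decide
  · rw [lineClasses_eq]; decide
  · rw [orbit_eq, Set.ncard_coe_finset]; decide
  · rw [orbit_eq, orbit_eq, Finset.disjoint_coe]; decide
  · rw [orbit_eq, orbit_eq, lineClasses_eq, ← Finset.coe_union, Finset.coe_inj]; decide
end

section
/- In the lattice Λ = ℤ^8 with bilinear form ⟨u,v⟩ = u_0 v_0 − u_1 v_1 − ⋯ − u_7 v_7 and K = (−3,1,1,1,1,1,1,1), there are exactly 56 line classes (vectors v with ⟨v,v⟩ = −1 and ⟨v,K⟩ = −1). Moreover, with ρ_r(v) = v + ⟨r,v⟩ r the reflection in a root r, H = (1,0,…,0), e_i the standard basis vector in position i (1 ≤ i ≤ 7), and simple roots r_1 = e_1 − e_2, r_2 = H − e_1 − e_2 − e_3, r_3 = e_2 − e_3, r_4 = e_3 − e_4, r_5 = e_4 − e_5, r_6 = e_5 − e_6, r_7 = e_6 − e_7, the Coxeter rotation σ = ρ_{r_1} ∘ ρ_{r_2}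 ∘ ρ_{r_3} ∘ ρ_{r_4} ∘ ρ_{r_5} ∘ ρ_{r_6} ∘ ρ_{r_7} has order 18 and its action on the 56 line classes has exactly four orbits, of sizes 18, 18, 18 and 2. -/
namespace DP2Lattice

/-- The bilinear form `⟨u,v⟩ = u₀v₀ − u₁v₁ − ⋯ − u₇v₇` on `Λ = ℤ⁸`. -/
def B (u v : Fin 8 → ℤ) : ℤ := u 0 * v 0 - ∑ i : Fin 7, u i.succ * v i.succ

/-- The canonical class `K = (−3,1,1,1,1,1,1,1)`. -/
def K : Fin 8 → ℤ := ![-3, 1, 1, 1, 1, 1, 1, 1]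

/-- The set of line classes: `⟨v,v⟩ = −1` and `⟨v,K⟩ = −1`. -/
def lineClasses : Set (Fin 8 → ℤ) := {v | B v v = -1 ∧ B v K = -1}

/-- The reflection `ρ_r(v) = v + ⟨r,v⟩ r` in a root `r`. -/
def refl (r v : Fin 8 → ℤ) : Fin 8 → ℤ := v + B r v • r

/-- The hyperplane class `H = (1,0,0,0,0,0,0,0)`. -/
def H : Fin 8 → ℤ := ![1, 0, 0, 0, 0, 0, 0, 0]

/-- The standard basis vector `eᵢ` of `ℤ⁸`. -/
def e (i : Fin 8) : Fin 8 → ℤ := Pi.single i 1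

/-- The Coxeter rotation `σ = ρ_{r₁} ∘ ρ_{r₂} ∘ ⋯ ∘ ρ_{r₇}` for the simple roots
`r₁ = e₁−e₂`, `r₂ = H−e₁−e₂−e₃`, `r₃ = e₂−e₃`, `r₄ = e₃−e₄`, `r₅ = e₄−e₅`,
`r₆ = e₅−e₆`, `r₇ = e₆−e₇` of `E₇`. -/
def σ : (Fin 8 → ℤ) → (Fin 8 → ℤ) :=
  refl (e 1 - e 2) ∘ refl (H - e 1 - e 2 - e 3) ∘ refl (e 2 - e 3) ∘
    refl (e 3 - e 4) ∘ refl (e 4 - e 5) ∘ refl (e 5 - e 6) ∘ refl (e 6 - e 7)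

/-- The `σ`-orbit of a lattice vector. -/
def orbit (v : Fin 8 → ℤ) : Set (Fin 8 → ℤ) := Set.range fun k : ℕ => σ^[k] v

end DP2Lattice

/-!
Every reflection in a root preserves `B` and fixes `K`, so `σ` permutes the line classes.
For a line class `(a, b₁, …, b₇)` we have `∑ bᵢ = 1 - 3a` and `∑ bᵢ² = a² + 1`; Cauchy–Schwarz
forces `0 ≤ a ≤ 3`, and then `∑ (bᵢ - m)(bᵢ - m - 1) = 0` for `m = ⌊(1 - 3a)/7⌋`, so every `bᵢ` is
`m` or `m + 1`. This confines the line classes to 512 explicit vectors, and the rest is a finite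
computation with the orbits of `e₁`, `e₃`, `H - e₁ - e₄` and `H - e₄ - e₆`. Since `σ` is linear,
`σ¹⁸ = id` only has to be checked on the standard basis.
-/

theorem Function.range_iterate_eq_toFinset_iterate {α : Type*} [DecidableEq α] {f : α → α}
    {x : α} {n : ℕ} (hx : f^[n] x = x) (hn : 0 < n) :
    Set.range (fun k => f^[k] x) = ↑(List.iterate f x n).toFinset := by
  ext y
  simp only [Set.mem_range, List.coe_toFinset, Set.mem_ofPred_eq, List.mem_iterate]
  constructor
  · rintro ⟨k, rfl⟩
    exact ⟨k % n, Nat.mod_lt k hn, (Function.IsPeriodicPt.iterate_mod_apply hx k).symm⟩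
  · rintro ⟨k, -, rfl⟩
    exact ⟨k, rfl⟩

theorem Int.eq_or_eq_add_one_of_sum_mul_eq_zero {ι : Type*} {s : Finset ι} {f : ι → ℤ} {m : ℤ}
    (h : ∑ i ∈ s, (f i - m) * (f i - m - 1) = 0) : ∀ i ∈ s, f i = m ∨ f i = m + 1 := by
  have hnonneg (i : ι) : 0 ≤ (f i - m) * (f i - m - 1) := by
    nlinarith [Int.le_self_sq (f i - m)]
  intro i hi
  rcases mul_eq_zero.1 ((Finset.sum_eq_zero_iff_of_nonneg fun i _ => hnonneg i).1 h i hi) with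
    h | h <;> omega

namespace DP2Lattice

theorem B_comm (u v : Fin 8 → ℤ) : B u v = B v u := by
  simp only [B, mul_comm]

theorem B_add_right (u v w : Fin 8 → ℤ) : B u (v + w) = B u v + B u w := by
  simp only [B, Pi.add_apply, mul_add, Finset.sum_add_distrib]
  ring

theorem B_smul_right (c : ℤ) (u v : Fin 8 → ℤ) : B u (c • v) = c * B u v := by
  simp only [B, Pi.smul_apply, smul_eq_mul, mul_sub, Finset.mul_sum]
  ring_nf

theorem B_add_left (u v w : Fin 8 → ℤ) : B (u + v) w = B u w + B v w := by
  simp only [B_comm _ w, B_add_right]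

theorem B_smul_left (c : ℤ) (u v : Fin 8 → ℤ) : B (c • u) v = c * B u v := by
  simp only [B_comm _ v, B_smul_right]

theorem B_refl_refl {r : Fin 8 → ℤ} (hr : B r r = -2) (u v : Fin 8 → ℤ) :
    B (refl r u) (refl r v) = B u v := by
  simp only [refl, B_add_left, B_add_right, B_smul_left, B_smul_right, B_comm u r]
  linear_combination B r u * B r v * hr

theorem refl_eq_self {r v : Fin 8 → ℤ} (h : B r v = 0) : refl r v = v := by
  simp [refl, h]

theorem B_σ_σ (u v : Fin 8 → ℤ) : B (σ u) (σ v) = B u v := by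
  simp (disch := decide) only [σ, Function.comp_apply, B_refl_refl]

theorem σ_K : σ K = K := by
  simp (disch := decide) only [σ, Function.comp_apply, refl_eq_self]

theorem σ_mapsTo_lineClasses : Set.MapsTo σ lineClasses lineClasses :=
  fun v ⟨hvv, hvK⟩ => ⟨by rw [B_σ_σ, hvv], by rw [← σ_K, B_σ_σ, hvK]⟩

def reflₗ (r : Fin 8 → ℤ) : Module.End ℤ (Fin 8 → ℤ) where
  toFun := refl r
  map_add' u v := by
    simp only [refl, B_add_right, add_smul]
    abel
  map_smul' c v := by
    simp only [refl, B_smul_right, mul_smul, smul_add, RingHom.id_apply]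

def σₗ : Module.End ℤ (Fin 8 → ℤ) :=
  reflₗ (e 1 - e 2) * reflₗ (H - e 1 - e 2 - e 3) * reflₗ (e 2 - e 3) *
    reflₗ (e 3 - e 4) * reflₗ (e 4 - e 5) * reflₗ (e 5 - e 6) * reflₗ (e 6 - e 7)

theorem coe_σₗ : ⇑σₗ = σ := rfl

theorem iterate_σ_eighteen : σ^[18] = id := by
  have hbasis : ∀ i, σ^[18] (e i) = e i := by decide +kernel
  suffices σₗ ^ 18 = 1 by rw [← coe_σₗ, ← Module.End.coe_pow, this, Module.End.coe_one]
  ext i : 2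
  simpa [Module.End.coe_pow, coe_σₗ, e] using hbasis i

theorem iterate_σ_ne_id : ∀ k : ℕ, 0 < k → k < 18 → σ^[k] ≠ id := by
  have hmoves : ∀ k < 18, 0 < k → σ^[k] (e 1) ≠ e 1 := by decide +kernel
  exact fun k hk hk18 hid => hmoves k hk18 hk (congrFun hid (e 1))

instance : DecidablePred (· ∈ lineClasses) := fun v =>
  inferInstanceAs (Decidable (B v v = -1 ∧ B v K = -1))

theorem sum_apply_succ_eq_of_mem_lineClasses {v : Fin 8 → ℤ} (hv : v ∈ lineClasses) :
    ∑ i : Fin 7, v i.succ = 1 - 3 * v 0 ∧ ∑ i : Fin 7, v i.succ ^ 2 = v 0 ^ 2 + 1 := by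
  obtain ⟨hvv, hvK⟩ := hv
  have hK : ∀ i : Fin 7, K i.succ = 1 := by decide
  simp only [B, hK, mul_one, show K 0 = -3 from rfl] at hvv hvK
  simp only [sq]
  constructor <;> linarith

theorem apply_zero_mem_Icc_of_mem_lineClasses {v : Fin 8 → ℤ} (hv : v ∈ lineClasses) :
    v 0 ∈ Finset.Icc 0 3 := by
  obtain ⟨hsum, hsq⟩ := sum_apply_succ_eq_of_mem_lineClasses hv
  have hcs := sq_sum_le_card_mul_sum_sq (s := Finset.univ) (f := fun i : Fin 7 => v i.succ)
  rw [hsum, hsq, Finset.card_univ, Fintype.card_fin, Nat.cast_ofNat] at hcs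
  rw [Finset.mem_Icc]
  constructor <;> nlinarith

theorem apply_succ_eq_or_eq_add_one_of_mem_lineClasses {v : Fin 8 → ℤ} (hv : v ∈ lineClasses)
    (i : Fin 7) :
    v i.succ = (1 - 3 * v 0) / 7 ∨ v i.succ = (1 - 3 * v 0) / 7 + 1 := by
  obtain ⟨hsum, hsq⟩ := sum_apply_succ_eq_of_mem_lineClasses hv
  have ha := Finset.mem_Icc.1 (apply_zero_mem_Icc_of_mem_lineClasses hv)
  refine Int.eq_or_eq_add_one_of_sum_mul_eq_zero (f := fun i => v i.succ) ?_ i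
    (Finset.mem_univ i)
  set m := (1 - 3 * v 0) / 7 with hm
  have hexpand : ∑ i : Fin 7, (v i.succ - m) * (v i.succ - m - 1) =
      ∑ i : Fin 7, v i.succ ^ 2 - (2 * m + 1) * ∑ i : Fin 7, v i.succ + 7 * (m * (m + 1)) := by
    rw [Finset.mul_sum, ← Finset.sum_sub_distrib,
      show 7 * (m * (m + 1)) = ∑ _ : Fin 7, m * (m + 1) by simp, ← Finset.sum_add_distrib]
    exact Finset.sum_congr rfl fun i _ => by ring
  rw [hexpand, hsum, hsq, hm]
  generalize v 0 = a at ha ⊢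
  obtain ⟨h0, h3⟩ := ha
  interval_cases a <;> norm_num

def lineClassCandidates (a : ℤ) : Finset (Fin 8 → ℤ) :=
  Fintype.piFinset (Fin.cons {a} fun _ => {(1 - 3 * a) / 7, (1 - 3 * a) / 7 + 1})

theorem mem_lineClassCandidates_of_mem_lineClasses {v : Fin 8 → ℤ} (hv : v ∈ lineClasses) :
    v ∈ lineClassCandidates (v 0) := by
  rw [lineClassCandidates, Fintype.mem_piFinset, Fin.forall_fin_succ]
  refine ⟨Finset.mem_singleton_self _, fun i => ?_⟩
  simpa only [Fin.cons_succ, Finset.mem_insert, Finset.mem_singleton] using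
    apply_succ_eq_or_eq_add_one_of_mem_lineClasses hv i

theorem orbit_e₁ : orbit (e 1) = ↑(List.iterate σ (e 1) 18).toFinset :=
  Function.range_iterate_eq_toFinset_iterate (congrFun iterate_σ_eighteen _) (by norm_num)

theorem orbit_e₃ : orbit (e 3) = ↑(List.iterate σ (e 3) 18).toFinset :=
  Function.range_iterate_eq_toFinset_iterate (congrFun iterate_σ_eighteen _) (by norm_num)

theorem orbit_H_sub_e₁_sub_e₄ :
    orbit (H - e 1 - e 4) = ↑(List.iterate σ (H - e 1 - e 4) 18).toFinset :=
  Function.range_iterate_eq_toFinset_iterate (congrFun iterate_σ_eighteen _) (by norm_num)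

theorem orbit_H_sub_e₄_sub_e₆ :
    orbit (H - e 4 - e 6) = ↑(List.iterate σ (H - e 4 - e 6) 2).toFinset :=
  Function.range_iterate_eq_toFinset_iterate (by decide +kernel) (by norm_num)

theorem lineClasses_eq_union_orbits : lineClasses =
    orbit (e 1) ∪ orbit (e 3) ∪ orbit (H - e 1 - e 4) ∪ orbit (H - e 4 - e 6) := by
  refine subset_antisymm (fun v hv => ?_) ?_
  · have hcheck : ∀ a ∈ Finset.Icc (0 : ℤ) 3, ∀ v ∈ lineClassCandidates a, v ∈ lineClasses →
        v ∈ List.iterate σ (e 1) 18 ∨ v ∈ List.iterate σ (e 3) 18 ∨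
          v ∈ List.iterate σ (H - e 1 - e 4) 18 ∨ v ∈ List.iterate σ (H - e 4 - e 6) 2 := by
      decide +kernel
    rw [orbit_e₁, orbit_e₃, orbit_H_sub_e₁_sub_e₄, orbit_H_sub_e₄_sub_e₆]
    simp only [Set.mem_union, Finset.mem_coe, List.mem_toFinset, or_assoc]
    exact hcheck _ (apply_zero_mem_Icc_of_mem_lineClasses hv) v
      (mem_lineClassCandidates_of_mem_lineClasses hv) hv
  · refine Set.union_subset (Set.union_subset (Set.union_subset ?_ ?_) ?_) ?_ <;>
      rintro _ ⟨k, rfl⟩ <;> exact σ_mapsTo_lineClasses.iterate k (by decide)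

theorem ncard_lineClasses : lineClasses.ncard = 56 := by
  rw [lineClasses_eq_union_orbits, orbit_e₁, orbit_e₃, orbit_H_sub_e₁_sub_e₄,
    orbit_H_sub_e₄_sub_e₆, ← Finset.coe_union, ← Finset.coe_union, ← Finset.coe_union,
    Set.ncard_coe_finset]
  decide +kernel

end DP2Lattice

open DP2Lattice in
/-- In the Néron–Severi lattice of a degree-2 del Pezzo surface there are
exactly 56 line classes; the Coxeter rotation `σ` of `E₇` has order 18 and acts
on the 56 line classes with exactly four orbits, of sizes 18, 18, 18 and 2. -/
theorem coxeter_rotation_E7 :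
    lineClasses.ncard = 56 ∧
    σ^[18] = id ∧
    (∀ k : ℕ, 0 < k → k < 18 → σ^[k] ≠ id) ∧
    (∀ v ∈ lineClasses, σ v ∈ lineClasses) ∧
    ∃ v₁ ∈ lineClasses, ∃ v₂ ∈ lineClasses, ∃ v₃ ∈ lineClasses, ∃ v₄ ∈ lineClasses,
      (orbit v₁).ncard = 18 ∧ (orbit v₂).ncard = 18 ∧ (orbit v₃).ncard = 18 ∧
      (orbit v₄).ncard = 2 ∧
      Disjoint (orbit v₁) (orbit v₂) ∧ Disjoint (orbit v₁) (orbit v₃) ∧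
      Disjoint (orbit v₁) (orbit v₄) ∧ Disjoint (orbit v₂) (orbit v₃) ∧
      Disjoint (orbit v₂) (orbit v₄) ∧ Disjoint (orbit v₃) (orbit v₄) ∧
      orbit v₁ ∪ orbit v₂ ∪ orbit v₃ ∪ orbit v₄ = lineClasses := by
  refine ⟨ncard_lineClasses, iterate_σ_eighteen, iterate_σ_ne_id,
    fun v hv => σ_mapsTo_lineClasses hv, e 1, by decide, e 3, by decide, H - e 1 - e 4, by decide,
    H - e 4 - e 6, by decide, ?_⟩
  refine ⟨?_, ?_, ?_, ?_, ?_, ?_, ?_, ?_, ?_, ?_, lineClasses_eq_union_orbits.symm⟩ <;>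
    simp only [orbit_e₁, orbit_e₃, orbit_H_sub_e₁_sub_e₄, orbit_H_sub_e₄_sub_e₆,
      Set.ncard_coe_finset, Finset.disjoint_coe] <;>
    decide +kernel
end
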